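/- Let f be a holomorphic function on the open unit disk 𝔻 ⊆ ℂ with Re f(z) > 0 for all z ∈ 𝔻. Then for all z, w ∈ 𝔻, |log(Re f(z)) − log(Re f(w))| ≤ σ(z, w); that is, Re f is contractive with respect to the hyperbolic distance on 𝔻 and the distance on (0, ∞) induced by the weight ω(t) = 1/t (the hyperbolic distance on (0,∞) inherited from the half-plane (0,∞) × ℝ). -/

import Mathlib

/-!
The Cayley map `x ↦ (x - 1) / (x + 1)` sends the right half-plane into the disk, so by the
Schwarz–Pick lemma `cayley ∘ f` does not increase the hyperbolic distance. The pseudo-hyperbolic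
distance between `cayley a` and `cayley b` is `|a - b| / |conj a + b|`, and the elementary
inequality `Re a / Re b ≤ (|conj a + b| + |a - b|) / (|conj a + b| - |a - b|)` then bounds
`|log Re a - log Re b|` by the hyperbolic distance between `cayley a` and `cayley b`.
-/

/-- The pseudo-hyperbolic distance on the unit disk. -/
noncomputable def pseudoHypDist (z w : ℂ) : ℝ :=
  ‖z - w‖ / ‖1 - (starRingEnd ℂ) z * w‖

/-- The hyperbolic distance on the unit disk (curvature −1, density 2/(1−|z|²)). -/
noncomputable def hypDist (z w : ℂ) : ℝ :=
  Real.log ((1 + pseudoHypDist z w) / (1 - pseudoHypDist z w))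

open Complex Metric Set ComplexConjugate

noncomputable def diskMobius (a z : ℂ) : ℂ := (a - z) / (1 - conj a * z)

noncomputable def cayley (x : ℂ) : ℂ := (x - 1) / (x + 1)

lemma normSq_one_sub_conj_mul_sub_normSq_sub (a z : ℂ) :
    normSq (1 - conj a * z) - normSq (a - z) = (1 - normSq a) * (1 - normSq z) := by
  simp only [normSq_apply, sub_re, sub_im, one_re, one_im, mul_re, mul_im, conj_re, conj_im]
  ring

lemma norm_sub_lt_norm_one_sub_conj_mul {a z : ℂ} (ha : a ∈ ball (0 : ℂ) 1)
    (hz : z ∈ ball (0 : ℂ) 1) : ‖a - z‖ < ‖1 - conj a * z‖ := by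
  rw [mem_ball_zero_iff, ← sq_lt_one_iff₀ (norm_nonneg _), Complex.sq_norm] at ha hz
  rw [← sq_lt_sq₀ (norm_nonneg _) (norm_nonneg _), Complex.sq_norm, Complex.sq_norm]
  nlinarith [normSq_one_sub_conj_mul_sub_normSq_sub a z]

lemma one_sub_conj_mul_ne_zero {a z : ℂ} (ha : a ∈ ball (0 : ℂ) 1)
    (hz : z ∈ ball (0 : ℂ) 1) : 1 - conj a * z ≠ 0 :=
  norm_pos_iff.mp ((norm_nonneg _).trans_lt (norm_sub_lt_norm_one_sub_conj_mul ha hz))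

lemma pseudoHypDist_comm (z w : ℂ) : pseudoHypDist z w = pseudoHypDist w z := by
  have : 1 - conj w * z = conj (1 - conj z * w) := by simp [mul_comm]
  rw [pseudoHypDist, pseudoHypDist, norm_sub_rev, this, Complex.norm_conj]

lemma pseudoHypDist_nonneg (z w : ℂ) : 0 ≤ pseudoHypDist z w :=
  div_nonneg (norm_nonneg _) (norm_nonneg _)

lemma pseudoHypDist_lt_one {z w : ℂ} (hz : z ∈ ball (0 : ℂ) 1) (hw : w ∈ ball (0 : ℂ) 1) :
    pseudoHypDist z w < 1 :=
  (div_lt_one (norm_pos_iff.mpr (one_sub_conj_mul_ne_zero hz hw))).mpr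
    (norm_sub_lt_norm_one_sub_conj_mul hz hw)

lemma hypDist_comm (z w : ℂ) : hypDist z w = hypDist w z := by
  rw [hypDist, hypDist, pseudoHypDist_comm]

lemma hypDist_le_hypDist_of_pseudoHypDist_le {a b z w : ℂ}
    (h : pseudoHypDist a b ≤ pseudoHypDist z w) (hz : z ∈ ball (0 : ℂ) 1)
    (hw : w ∈ ball (0 : ℂ) 1) : hypDist a b ≤ hypDist z w := by
  have h₀ := pseudoHypDist_nonneg a b
  have h₁ := pseudoHypDist_lt_one hz hw
  refine Real.log_le_log (div_pos (by linarith) (by linarith)) ?_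
  rw [div_le_div_iff₀ (by linarith) (by linarith)]
  nlinarith

lemma norm_diskMobius (a z : ℂ) : ‖diskMobius a z‖ = pseudoHypDist a z := norm_div _ _

lemma diskMobius_self (a : ℂ) : diskMobius a a = 0 := by simp [diskMobius]

lemma diskMobius_zero (a : ℂ) : diskMobius a 0 = a := by simp [diskMobius]

lemma diskMobius_diskMobius {a z : ℂ} (ha : a ∈ ball (0 : ℂ) 1)
    (hz : z ∈ ball (0 : ℂ) 1) : diskMobius a (diskMobius a z) = z := by
  have h₁ := one_sub_conj_mul_ne_zero ha hz
  have h₂ := one_sub_conj_mul_ne_zero ha ha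
  have hnum : a - diskMobius a z = z * (1 - conj a * a) / (1 - conj a * z) := by
    rw [diskMobius, eq_div_iff h₁, sub_mul, div_mul_cancel₀ _ h₁]; ring
  have hden : 1 - conj a * diskMobius a z = (1 - conj a * a) / (1 - conj a * z) := by
    rw [diskMobius]; field_simp; ring
  rw [diskMobius, hnum, hden, div_div_div_cancel_right₀ h₁, mul_div_cancel_right₀ _ h₂]

lemma mapsTo_diskMobius {a : ℂ} (ha : a ∈ ball (0 : ℂ) 1) :
    MapsTo (diskMobius a) (ball 0 1) (ball 0 1) := fun _ hz => by
  rw [mem_ball_zero_iff, norm_diskMobius]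
  exact pseudoHypDist_lt_one ha hz

lemma differentiableOn_diskMobius {a : ℂ} (ha : a ∈ ball (0 : ℂ) 1) :
    DifferentiableOn ℂ (diskMobius a) (ball 0 1) := fun _ hz =>
  ((differentiableAt_const a).sub differentiableAt_id).div
    ((differentiableAt_const 1).sub ((differentiableAt_const _).mul differentiableAt_id))
    (one_sub_conj_mul_ne_zero ha hz) |>.differentiableWithinAt

theorem pseudoHypDist_le_of_mapsTo_ball {g : ℂ → ℂ} (hd : DifferentiableOn ℂ g (ball 0 1))
    (hg : MapsTo g (ball 0 1) (ball 0 1)) {z w : ℂ} (hz : z ∈ ball (0 : ℂ) 1)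
    (hw : w ∈ ball (0 : ℂ) 1) : pseudoHypDist (g w) (g z) ≤ pseudoHypDist w z := by
  -- Schwarz's lemma applied to `g` conjugated by the automorphisms moving `w` and `g w` to `0`.
  set h := diskMobius (g w) ∘ g ∘ diskMobius w
  have hmaps : MapsTo h (ball 0 1) (ball 0 1) :=
    (mapsTo_diskMobius (hg hw)).comp (hg.comp (mapsTo_diskMobius hw))
  have hdiff : DifferentiableOn ℂ h (ball 0 1) :=
    (differentiableOn_diskMobius (hg hw)).comp (hd.comp (differentiableOn_diskMobius hw)
      (mapsTo_diskMobius hw)) (hg.comp (mapsTo_diskMobius hw))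
  have h₀ : h 0 = 0 := by simp only [h, Function.comp_apply, diskMobius_zero, diskMobius_self]
  have hζ : ‖diskMobius w z‖ < 1 := mem_ball_zero_iff.mp (mapsTo_diskMobius hw hz)
  have schwarz :=
    norm_le_norm_of_mapsTo_ball hdiff (hmaps.mono_right ball_subset_closedBall) h₀ hζ
  simpa only [h, Function.comp_apply, diskMobius_diskMobius hw hz, norm_diskMobius] using schwarz

theorem hypDist_le_of_mapsTo_ball {g : ℂ → ℂ} (hd : DifferentiableOn ℂ g (ball 0 1))
    (hg : MapsTo g (ball 0 1) (ball 0 1)) {z w : ℂ} (hz : z ∈ ball (0 : ℂ) 1)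
    (hw : w ∈ ball (0 : ℂ) 1) : hypDist (g z) (g w) ≤ hypDist z w :=
  hypDist_le_hypDist_of_pseudoHypDist_le (pseudoHypDist_le_of_mapsTo_ball hd hg hw hz) hz hw

lemma add_one_ne_zero_of_re_pos {x : ℂ} (hx : 0 < x.re) : x + 1 ≠ 0 :=
  ne_zero_of_re_pos (by simp only [add_re, one_re]; linarith)

lemma cayley_mem_ball {x : ℂ} (hx : 0 < x.re) : cayley x ∈ ball (0 : ℂ) 1 := by
  rw [mem_ball_zero_iff, cayley, norm_div,
    div_lt_one (norm_pos_iff.mpr (add_one_ne_zero_of_re_pos hx)),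
    ← sq_lt_sq₀ (norm_nonneg _) (norm_nonneg _), Complex.sq_norm, Complex.sq_norm]
  simp only [normSq_apply, add_re, add_im, sub_re, sub_im, one_re, one_im]
  nlinarith

lemma differentiableAt_cayley {x : ℂ} (hx : x + 1 ≠ 0) : DifferentiableAt ℂ cayley x :=
  (differentiableAt_id.sub (differentiableAt_const 1)).div
    (differentiableAt_id.add (differentiableAt_const 1)) hx

lemma pseudoHypDist_cayley {a b : ℂ} (ha : 0 < a.re) (hb : 0 < b.re) :
    pseudoHypDist (cayley a) (cayley b) = ‖a - b‖ / ‖conj a + b‖ := by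
  have ha₁ : a + 1 ≠ 0 := add_one_ne_zero_of_re_pos ha
  have ha₂ : conj a + 1 ≠ 0 := add_one_ne_zero_of_re_pos (by simpa using ha)
  have hb₁ : b + 1 ≠ 0 := add_one_ne_zero_of_re_pos hb
  have hnum : cayley a - cayley b = 2 * (a - b) / ((a + 1) * (b + 1)) := by
    rw [cayley, cayley]; field_simp; ring
  have hden : 1 - conj (cayley a) * cayley b = 2 * (conj a + b) / ((conj a + 1) * (b + 1)) := by
    rw [cayley, cayley, map_div₀, map_sub, map_add, map_one]; field_simp; ring
  have hconj : ‖conj a + 1‖ = ‖a + 1‖ := by rw [← Complex.norm_conj]; simp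
  rw [pseudoHypDist, hnum, hden]
  simp only [norm_div, norm_mul, hconj]
  field_simp

lemma re_div_re_le_of_re_pos {a b : ℂ} (ha : 0 < a.re) (hb : 0 < b.re) :
    a.re / b.re ≤
      (1 + pseudoHypDist (cayley a) (cayley b)) / (1 - pseudoHypDist (cayley a) (cayley b)) := by
  rw [pseudoHypDist_cayley ha hb]
  set A := ‖conj a + b‖
  set B := ‖a - b‖
  have hdiff : A ^ 2 - B ^ 2 = 4 * a.re * b.re := by
    simp only [A, B, Complex.sq_norm, normSq_apply, add_re, add_im, sub_re, sub_im, conj_re,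
      conj_im]
    ring
  have hA : a.re + b.re ≤ A := by simpa using re_le_norm (conj a + b)
  have hB : a.re - b.re ≤ B := by simpa using re_le_norm (a - b)
  have hA₀ : 0 < A := by linarith
  have hAB : 0 < A - B := by nlinarith [norm_nonneg (a - b)]
  rw [show (1 + B / A) / (1 - B / A) = (A + B) / (A - B) by field_simp, div_le_div_iff₀ hb hAB]
  -- times `A + B`, this reads `4 a.re² b.re ≤ b.re (A + B)²`, and `A + B ≥ 2 a.re`
  nlinarith

lemma log_re_sub_log_re_le_hypDist_cayley {a b : ℂ} (ha : 0 < a.re) (hb : 0 < b.re) :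
    Real.log a.re - Real.log b.re ≤ hypDist (cayley a) (cayley b) := by
  rw [← Real.log_div ha.ne' hb.ne', hypDist]
  exact Real.log_le_log (div_pos ha hb) (re_div_re_le_of_re_pos ha hb)

lemma abs_log_re_sub_log_re_le_hypDist_cayley {a b : ℂ} (ha : 0 < a.re) (hb : 0 < b.re) :
    |Real.log a.re - Real.log b.re| ≤ hypDist (cayley a) (cayley b) :=
  abs_sub_le_iff.mpr ⟨log_re_sub_log_re_le_hypDist_cayley ha hb,
    hypDist_comm (cayley a) _ ▸ log_re_sub_log_re_le_hypDist_cayley hb ha⟩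

/-- If f is holomorphic on the unit disk with Re f > 0, then
`|log(Re f(z)) − log(Re f(w))| ≤ σ(z,w)` (Marković's theorem). -/
theorem re_holomorphic_halfplane_contraction (f : ℂ → ℂ)
    (hf : ∀ z ∈ Metric.ball (0 : ℂ) 1, DifferentiableAt ℂ f z)
    (hRe : ∀ z ∈ Metric.ball (0 : ℂ) 1, 0 < (f z).re)
    (z w : ℂ) (hz : z ∈ Metric.ball (0 : ℂ) 1) (hw : w ∈ Metric.ball (0 : ℂ) 1) :
    |Real.log (f z).re - Real.log (f w).re| ≤ hypDist z w := by
  have hmaps : MapsTo (cayley ∘ f) (ball 0 1) (ball 0 1) := fun ζ hζ =>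
    cayley_mem_ball (hRe ζ hζ)
  have hdiff : DifferentiableOn ℂ (cayley ∘ f) (ball 0 1) := fun ζ hζ =>
    ((differentiableAt_cayley (add_one_ne_zero_of_re_pos (hRe ζ hζ))).comp ζ
      (hf ζ hζ)).differentiableWithinAt
  calc |Real.log (f z).re - Real.log (f w).re|
      ≤ hypDist (cayley (f z)) (cayley (f w)) :=
        abs_log_re_sub_log_re_le_hypDist_cayley (hRe z hz) (hRe w hw)
    _ ≤ hypDist z w := hypDist_le_of_mapsTo_ball hdiff hmaps hz hw
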